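/- Let M be an additive commutative group, let S be a finite set, and let T = S × {0,1}. Suppose x : Finset T → M satisfies: for every s ∈ S and every σ ⊆ T with (s,0) ∈ σ and (s,1) ∉ σ, x(σ) = x(σ \ {(s,0)}), and symmetrically for every σ with (s,1) ∈ σ and (s,0) ∉ σ, x(σ) = x(σ \ {(s,1)}). Then ∑_{σ ⊆ T} (-1)^{|σ|} x(σ) = (-1)^{|S|} ∑_{μ ⊆ S} (-1)^{|μ|} x(μ × {0,1}). -/
import Mathlib

theorem stmt0 {M : Type*} [AddCommGroup M] {α : Type*} [DecidableEq α]
    (S : Finset α) (x : Finset (α × Fin 2) → M)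
    (h0 : ∀ s ∈ S, ∀ σ ∈ (S ×ˢ ({0, 1} : Finset (Fin 2))).powerset,
      (s, (0 : Fin 2)) ∈ σ → (s, (1 : Fin 2)) ∉ σ → x σ = x (σ \ {(s, 0)}))
    (h1 : ∀ s ∈ S, ∀ σ ∈ (S ×ˢ ({0, 1} : Finset (Fin 2))).powerset,
      (s, (1 : Fin 2)) ∈ σ → (s, (0 : Fin 2)) ∉ σ → x σ = x (σ \ {(s, 1)})) :
    ∑ σ ∈ (S ×ˢ ({0, 1} : Finset (Fin 2))).powerset, (-1 : ℤ) ^ σ.card • x σ =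
      (-1 : ℤ) ^ S.card •
        ∑ μ ∈ S.powerset, (-1 : ℤ) ^ μ.card • x (μ ×ˢ ({0, 1} : Finset (Fin 2))) := by
  classical
  induction S using Finset.induction generalizing x with
  | empty => simp
  | @insert a S' ha ih =>
    set P : Finset (Fin 2) := {0, 1} with hPdef
    set T' : Finset (α × Fin 2) := S' ×ˢ P with hT'def
    -- structure of the big set
    have hT : (insert a S') ×ˢ P = insert (a, (0 : Fin 2)) (insert (a, 1) T') := by
      ext ⟨b, i⟩
      simp [hT'def, hPdef, Finset.mem_product, Prod.ext_iff]
      tauto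
    have ha1 : (a, (1 : Fin 2)) ∉ T' := by
      simp [hT'def, Finset.mem_product, ha]
    have ha0 : (a, (0 : Fin 2)) ∉ insert (a, (1 : Fin 2)) T' := by
      simp [hT'def, Finset.mem_product, ha, Prod.ext_iff]
    -- membership facts for σ ⊆ T'
    have hmem : ∀ σ ∈ T'.powerset, (a, (0:Fin 2)) ∉ σ ∧ (a, (1:Fin 2)) ∉ σ := by
      intro σ hσ
      rw [Finset.mem_powerset] at hσ
      constructor
      · intro h; exact (by simp [hT'def, Finset.mem_product, ha] : (a,(0:Fin 2)) ∉ T') (hσ h)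
      · intro h; exact ha1 (hσ h)
    -- subset inclusion of powersets
    have hsub : T'.powerset ⊆ ((insert a S') ×ˢ P).powerset := by
      apply Finset.powerset_mono.2
      exact Finset.product_subset_product_left (Finset.subset_insert _ _)
    -- restricted hypotheses for x
    have h0' : ∀ s ∈ S', ∀ σ ∈ T'.powerset,
        (s, (0:Fin 2)) ∈ σ → (s, (1:Fin 2)) ∉ σ → x σ = x (σ \ {(s, 0)}) := by
      intro s hs σ hσ h h'
      exact h0 s (Finset.mem_insert_of_mem hs) σ (hsub hσ) h h'
    have h1' : ∀ s ∈ S', ∀ σ ∈ T'.powerset,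
        (s, (1:Fin 2)) ∈ σ → (s, (0:Fin 2)) ∉ σ → x σ = x (σ \ {(s, 1)}) := by
      intro s hs σ hσ h h'
      exact h1 s (Finset.mem_insert_of_mem hs) σ (hsub hσ) h h'
    -- the shifted function y
    set y : Finset (α × Fin 2) → M :=
      fun σ => x (insert (a, (0:Fin 2)) (insert (a, 1) σ)) with hydef
    have hgsub : ∀ σ ∈ T'.powerset,
        insert (a, (0:Fin 2)) (insert (a, (1:Fin 2)) σ) ∈ ((insert a S') ×ˢ P).powerset := by
      intro σ hσ
      rw [Finset.mem_powerset] at hσ ⊢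
      rw [hT]
      exact Finset.insert_subset_insert _ (Finset.insert_subset_insert _ hσ)
    have h0y : ∀ s ∈ S', ∀ σ ∈ T'.powerset,
        (s, (0:Fin 2)) ∈ σ → (s, (1:Fin 2)) ∉ σ → y σ = y (σ \ {(s, 0)}) := by
      intro s hs σ hσ h h'
      have hsa : s ≠ a := fun h => ha (h ▸ hs)
      have e1 : x (insert (a, (0:Fin 2)) (insert (a, 1) σ)) =
          x ((insert (a, (0:Fin 2)) (insert (a, 1) σ)) \ {(s, 0)}) := by
        refine h0 s (Finset.mem_insert_of_mem hs) _ (hgsub σ hσ) ?_ ?_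
        · exact Finset.mem_insert_of_mem (Finset.mem_insert_of_mem h)
        · simp [Prod.ext_iff, hsa, h']
      have e2 : (insert (a, (0:Fin 2)) (insert (a, 1) σ)) \ {(s, (0:Fin 2))} =
          insert (a, (0:Fin 2)) (insert (a, 1) (σ \ {(s, 0)})) := by
        ext p
        simp only [Finset.mem_sdiff, Finset.mem_insert, Finset.mem_singleton]
        constructor
        · rintro ⟨(rfl | rfl | hp), hne⟩ <;> tauto
        · rintro (rfl | rfl | ⟨hp, hne⟩)
          · exact ⟨Or.inl rfl, by simp [Prod.ext_iff, hsa.symm, hsa]⟩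
          · exact ⟨Or.inr (Or.inl rfl), by simp [Prod.ext_iff, hsa.symm, hsa]⟩
          · exact ⟨Or.inr (Or.inr hp), hne⟩
      simp only [hydef]
      rw [e1, e2]
    have h1y : ∀ s ∈ S', ∀ σ ∈ T'.powerset,
        (s, (1:Fin 2)) ∈ σ → (s, (0:Fin 2)) ∉ σ → y σ = y (σ \ {(s, 1)}) := by
      intro s hs σ hσ h h'
      have hsa : s ≠ a := fun h => ha (h ▸ hs)
      have e1 : x (insert (a, (0:Fin 2)) (insert (a, 1) σ)) =
          x ((insert (a, (0:Fin 2)) (insert (a, 1) σ)) \ {(s, 1)}) := by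
        refine h1 s (Finset.mem_insert_of_mem hs) _ (hgsub σ hσ) ?_ ?_
        · exact Finset.mem_insert_of_mem (Finset.mem_insert_of_mem h)
        · simp [Prod.ext_iff, hsa, h']
      have e2 : (insert (a, (0:Fin 2)) (insert (a, 1) σ)) \ {(s, (1:Fin 2))} =
          insert (a, (0:Fin 2)) (insert (a, 1) (σ \ {(s, 1)})) := by
        ext p
        simp only [Finset.mem_sdiff, Finset.mem_insert, Finset.mem_singleton]
        constructor
        · rintro ⟨(rfl | rfl | hp), hne⟩ <;> tauto
        · rintro (rfl | rfl | ⟨hp, hne⟩)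
          · exact ⟨Or.inl rfl, by simp [Prod.ext_iff, hsa.symm, hsa]⟩
          · exact ⟨Or.inr (Or.inl rfl), by simp [Prod.ext_iff, hsa.symm, hsa]⟩
          · exact ⟨Or.inr (Or.inr hp), hne⟩
      simp only [hydef]
      rw [e1, e2]
    -- the two IH instances
    have ihX := ih x h0' h1'
    have ihY := ih y h0y h1y
    -- rewrite B's terms: y (μ ×ˢ P) = x ((insert a μ) ×ˢ P)
    have hB : ∀ μ ∈ S'.powerset,
        y (μ ×ˢ P) = x ((insert a μ) ×ˢ P) := by
      intro μ hμ
      rw [Finset.mem_powerset] at hμ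
      simp only [hydef]
      congr 1
      ext ⟨b, i⟩
      simp [Finset.mem_product, hPdef, Prod.ext_iff]
      tauto
    -- abbreviations
    set A : M := ∑ μ ∈ S'.powerset, (-1:ℤ) ^ μ.card • x (μ ×ˢ P) with hA
    set B : M := ∑ μ ∈ S'.powerset, (-1:ℤ) ^ μ.card • x ((insert a μ) ×ˢ P) with hBdef
    have ihY' : ∑ σ ∈ T'.powerset, (-1:ℤ) ^ σ.card • y σ = (-1:ℤ) ^ S'.card • B := by
      rw [ihY, hBdef]
      congr 1
      exact Finset.sum_congr rfl fun μ hμ => by rw [hB μ hμ]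
    -- expand LHS
    rw [hT, Finset.sum_powerset_insert ha0, Finset.sum_powerset_insert ha1,
      Finset.sum_powerset_insert ha1]
    -- simplify the four sums
    have s2 : ∑ σ ∈ T'.powerset, (-1:ℤ) ^ (insert (a, (1:Fin 2)) σ).card • x (insert (a, 1) σ)
        = -∑ σ ∈ T'.powerset, (-1:ℤ) ^ σ.card • x σ := by
      rw [← Finset.sum_neg_distrib]
      refine Finset.sum_congr rfl fun σ hσ => ?_
      obtain ⟨hm0, hm1⟩ := hmem σ hσ
      have hx : x (insert (a, (1:Fin 2)) σ) = x σ := by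
        have := h1 a (Finset.mem_insert_self _ _) (insert (a, 1) σ)
          (by rw [Finset.mem_powerset, hT]
              refine Finset.insert_subset_iff.2 ⟨Finset.mem_insert_of_mem (Finset.mem_insert_self _ _), ?_⟩
              exact (Finset.mem_powerset.1 hσ).trans
                ((Finset.subset_insert _ _).trans (Finset.subset_insert _ _)) ) 
          (Finset.mem_insert_self _ _) (by simp [Prod.ext_iff, hm0])
        rw [this, Finset.sdiff_singleton_eq_erase, Finset.erase_insert hm1]
      rw [hx, Finset.card_insert_of_notMem hm1, pow_succ]
      rw [mul_comm, mul_smul]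
      simp
    have s3 : ∑ σ ∈ T'.powerset, (-1:ℤ) ^ (insert (a, (0:Fin 2)) σ).card • x (insert (a, 0) σ)
        = -∑ σ ∈ T'.powerset, (-1:ℤ) ^ σ.card • x σ := by
      rw [← Finset.sum_neg_distrib]
      refine Finset.sum_congr rfl fun σ hσ => ?_
      obtain ⟨hm0, hm1⟩ := hmem σ hσ
      have hx : x (insert (a, (0:Fin 2)) σ) = x σ := by
        have := h0 a (Finset.mem_insert_self _ _) (insert (a, 0) σ)
          (by rw [Finset.mem_powerset, hT]
              refine Finset.insert_subset_iff.2 ⟨Finset.mem_insert_self _ _, ?_⟩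
              exact (Finset.mem_powerset.1 hσ).trans
                ((Finset.subset_insert _ _).trans (Finset.subset_insert _ _)) )
          (Finset.mem_insert_self _ _) (by simp [Prod.ext_iff, hm1])
        rw [this, Finset.sdiff_singleton_eq_erase, Finset.erase_insert hm0]
      rw [hx, Finset.card_insert_of_notMem hm0, pow_succ]
      rw [mul_comm, mul_smul]
      simp
    have s4 : ∑ σ ∈ T'.powerset,
        (-1:ℤ) ^ (insert (a, (0:Fin 2)) (insert (a, (1:Fin 2)) σ)).card •
          x (insert (a, 0) (insert (a, 1) σ))
        = ∑ σ ∈ T'.powerset, (-1:ℤ) ^ σ.card • y σ := by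
      refine Finset.sum_congr rfl fun σ hσ => ?_
      obtain ⟨hm0, hm1⟩ := hmem σ hσ
      have hc : (insert (a, (0:Fin 2)) (insert (a, (1:Fin 2)) σ)).card = σ.card + 2 := by
        rw [Finset.card_insert_of_notMem, Finset.card_insert_of_notMem hm1]
        simp [Finset.mem_insert, Prod.ext_iff, hm0]
      rw [hc, hydef]
      congr 1
      ring
    rw [s2, s3, s4, ihX, ihY']
    -- RHS
    rw [Finset.sum_powerset_insert ha, Finset.card_insert_of_notMem ha]
    have s5 : ∑ μ ∈ S'.powerset, (-1:ℤ) ^ (insert a μ).card • x ((insert a μ) ×ˢ P)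
        = -B := by
      rw [hBdef, ← Finset.sum_neg_distrib]
      refine Finset.sum_congr rfl fun μ hμ => ?_
      have hm : a ∉ μ := fun h => ha (Finset.mem_powerset.1 hμ h)
      rw [Finset.card_insert_of_notMem hm, pow_succ, mul_comm, mul_smul]
      simp
    rw [s5, ← hA]
    rw [pow_succ]
    clear_value A B
    rw [mul_comm, mul_smul, neg_one_smul, smul_add, smul_neg]
    abel
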